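/- Let u be a nonconstant inner function and let φ ∈ L∞(𝕋) satisfy |φ| = 1 a.e. Then m(D_φ) = √( 1 − sup{ ‖T_{\overline{uφ}} f‖² + ‖H_{φ̄} f‖² : f ∈ K_u, ‖f‖ = 1 } ). Moreover, √( max(0, 1 − (‖T_{\overline{uφ}}|_{K_u}‖² + ‖H_{φ̄}|_{K_u}‖²)) ) ≤ m(D_φ) ≤ min( √(1 − ‖T_{\overline{uφ}}|_{K_u}‖²), √(1 − ‖H_{φ̄}|_{K_u}‖²) ), where T|_{K_u} denotes the restriction of the operator T to K_u. -/

import Mathlib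

open MeasureTheory Complex
open scoped InnerProductSpace ENNReal

noncomputable section

namespace DTTO

instance fact2pi : Fact (0 < 2 * Real.pi) := ⟨by positivity⟩

/-- The circle, realized as `ℝ / 2πℤ`. -/
abbrev 𝕋c := AddCircle (2 * Real.pi)

/-- Normalized Haar (Lebesgue) measure on the circle. -/
abbrev μT : Measure 𝕋c := AddCircle.haarAddCircle

/-- `L²(𝕋)`. -/
abbrev L2 := Lp ℂ 2 μT

/-- `L∞(𝕋)`. -/
abbrev Linf := Lp ℂ ⊤ μT

lemma memL2_smul (φ : Linf) (f : L2) : MemLp (⇑φ • ⇑f) 2 μT :=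
  (Lp.memLp f).smul (Lp.memLp φ)

/-- Multiplication operator `M_φ : L² → L²` by a function `φ ∈ L∞`. -/
def Mmul (φ : Linf) : L2 →L[ℂ] L2 :=
  LinearMap.mkContinuous
    { toFun := fun f => (memL2_smul φ f).toLp _
      map_add' := fun f g => by
        refine Lp.ext ?_
        filter_upwards [MemLp.coeFn_toLp (memL2_smul φ (f + g)),
          MemLp.coeFn_toLp (memL2_smul φ f), MemLp.coeFn_toLp (memL2_smul φ g),
          Lp.coeFn_add f g,
          Lp.coeFn_add ((memL2_smul φ f).toLp _) ((memL2_smul φ g).toLp _)] with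
            x h1 h2 h3 h4 h5
        rw [h1, h5]
        simp only [Pi.add_apply, h2, h3]
        simp only [Pi.smul_apply', h4, Pi.add_apply, smul_add]
      map_smul' := fun c f => by
        refine Lp.ext ?_
        filter_upwards [MemLp.coeFn_toLp (memL2_smul φ (c • f)),
          MemLp.coeFn_toLp (memL2_smul φ f),
          Lp.coeFn_smul c f,
          Lp.coeFn_smul c ((memL2_smul φ f).toLp _)] with x h1 h2 h3 h4
        rw [h1, RingHom.id_apply, h4]
        simp only [Pi.smul_apply, Pi.smul_apply', h2, h3]
        exact smul_comm _ _ _ }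
    ‖φ‖ (fun f => by
      simp only [LinearMap.coe_mk, AddHom.coe_mk]
      rw [Lp.norm_toLp, Lp.norm_def, Lp.norm_def]
      rw [← ENNReal.toReal_mul]
      refine ENNReal.toReal_mono ?_ ?_
      · exact ENNReal.mul_ne_top (Lp.eLpNorm_ne_top φ) (Lp.eLpNorm_ne_top f)
      · exact eLpNorm_smul_le_eLpNorm_top_mul_eLpNorm 2 (Lp.aestronglyMeasurable f) ⇑φ)

/-- The canonical inclusion `L∞ ⊆ L²` (the measure is finite). -/
def toL2 (φ : Linf) : L2 := ((Lp.memLp φ).mono_exponent le_top).toLp _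

/-- The Hardy space `H²`, the closed linear span in `L²` of the exponentials `e_n`, `n ≥ 0`. -/
def H2 : Submodule ℂ L2 :=
  (Submodule.span ℂ (Set.range fun n : ℕ => (fourierLp 2 (n : ℤ) : L2))).topologicalClosure

instance : CompleteSpace H2 := (Submodule.isClosed_topologicalClosure _).completeSpace_coe

/-- `H²₋ = L² ⊖ H²`. -/
def Hminus : Submodule ℂ L2 := H2ᗮ

instance : CompleteSpace Hminus := (Submodule.isClosed_orthogonal _).completeSpace_coe

/-- `H∞ = H² ∩ L∞`. -/
def MemHinf (φ : Linf) : Prop := toL2 φ ∈ H2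

/-- An inner function: an element of `H² ∩ L∞` of modulus one a.e. -/
structure IsInnerFn (u : Linf) : Prop where
  memH2 : MemHinf u
  unimod : ∀ᵐ z ∂μT, ‖u z‖ = 1

/-- `u` is nonconstant (not a.e. equal to a constant). -/
def Nonconst (u : Linf) : Prop := ¬ ∃ c : ℂ, (⇑u : 𝕋c → ℂ) =ᵐ[μT] fun _ => c

/-- The subspace `uH²` of `L²`. -/
def uH2 (u : Linf) : Submodule ℂ L2 := H2.map (Mmul u).toLinearMap

/-- The model space `K_u = H² ⊖ uH² = H² ∩ (uH²)ᗮ`. -/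
def Ku (u : Linf) : Submodule ℂ L2 := H2 ⊓ (uH2 u)ᗮ

lemma isClosed_Ku (u : Linf) : IsClosed ((Ku u : Set L2)) := by
  have h : (Ku u : Set L2) = (H2 : Set L2) ∩ ((uH2 u)ᗮ : Set L2) := rfl
  rw [h]
  exact (Submodule.isClosed_topologicalClosure _).inter (Submodule.isClosed_orthogonal _)

instance (u : Linf) : CompleteSpace (Ku u) := (isClosed_Ku u).completeSpace_coe

/-- `K_u^⊥ = L² ⊖ K_u`. -/
def KuP (u : Linf) : Submodule ℂ L2 := (Ku u)ᗮ

instance (u : Linf) : CompleteSpace (KuP u) := (Submodule.isClosed_orthogonal _).completeSpace_coe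

/-- Dual truncated Toeplitz operator `D_φ` on `K_u^⊥`. -/
def Dop (u φ : Linf) : KuP u →L[ℂ] KuP u :=
  (KuP u).orthogonalProjectionOnto ∘L Mmul φ ∘L (KuP u).subtypeL

/-- Truncated Toeplitz operator `A_φ` on `K_u`. -/
def Aop (u φ : Linf) : Ku u →L[ℂ] Ku u :=
  (Ku u).orthogonalProjectionOnto ∘L Mmul φ ∘L (Ku u).subtypeL

/-- The operator `B_φ : K_u → K_u^⊥`, `B_φ f = (I - P_{K_u})(φ f)`. -/
def Bop (u φ : Linf) : Ku u →L[ℂ] KuP u :=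
  (KuP u).orthogonalProjectionOnto ∘L Mmul φ ∘L (Ku u).subtypeL

/-- Toeplitz operator `T_φ : H² → H²`. -/
def Top (φ : Linf) : H2 →L[ℂ] H2 :=
  H2.orthogonalProjectionOnto ∘L Mmul φ ∘L H2.subtypeL

/-- Hankel operator `H_φ : H² → H²₋`. -/
def Hop (φ : Linf) : H2 →L[ℂ] Hminus :=
  Hminus.orthogonalProjectionOnto ∘L Mmul φ ∘L H2.subtypeL

/-- The exponential `e₁(ζ) = ζ` as an element of `L∞`. -/
def e1 : Linf := fourierLp ⊤ 1

/-- The exponential `e₋₁(ζ) = ζ̄` as an element of `L∞`. -/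
def eneg1 : Linf := fourierLp ⊤ (-1)

/-- The operator `Q : H²₋ → H²₋`, `Q g = P₋(e₁ g)`. -/
def Qop : Hminus →L[ℂ] Hminus :=
  Hminus.orthogonalProjectionOnto ∘L Mmul e1 ∘L Hminus.subtypeL

/-- `u(0)`, the 0-th Fourier coefficient. -/
def coef0 (u : Linf) : ℂ := fourierCoeff (⇑u) 0

/-- Minimum modulus of a bounded operator. -/
def minMod {E F : Type*} [NormedAddCommGroup E] [NormedSpace ℂ E]
    [NormedAddCommGroup F] [NormedSpace ℂ F] (T : E →L[ℂ] F) : ℝ :=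
  ⨅ x : {x : E // ‖x‖ = 1}, ‖T x.1‖

/-- Complex conjugation on `L∞`. -/
lemma memLinf_star (φ : Linf) : MemLp (fun z => (starRingEnd ℂ) (φ z)) ⊤ μT := by
  refine ⟨continuous_star.comp_aestronglyMeasurable (Lp.aestronglyMeasurable φ), ?_⟩
  rw [eLpNorm_congr_norm_ae (g := ⇑φ) (Filter.Eventually.of_forall fun z => norm_star _)]
  exact Lp.eLpNorm_lt_top φ

/-- The complex conjugate `φ̄ ∈ L∞` of `φ ∈ L∞`. -/
def conjL (φ : Linf) : Linf := (memLinf_star φ).toLp _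

lemma memLinf_mul (φ ψ : Linf) : MemLp (⇑φ • ⇑ψ) ⊤ μT :=
  (Lp.memLp ψ).smul (Lp.memLp φ)

/-- The pointwise product of two elements of `L∞`. -/
def mulL (φ ψ : Linf) : Linf := (memLinf_mul φ ψ).toLp _

end DTTO

namespace DTTO

lemma inner_fourierLp_eq_zero {m n : ℤ} (h : m ≠ n) :
    (inner ℂ (fourierLp 2 m : L2) (fourierLp 2 n : L2) : ℂ) = 0 := by
  have hcoe := congrFun (coe_fourierBasis (T := 2 * Real.pi))
  have h2 := (fourierBasis (T := 2 * Real.pi)).orthonormal.2 (i := m) (j := n) h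
  simpa only [hcoe] using h2

lemma span_le_orth_em1 :
    Submodule.span ℂ (Set.range fun n : ℕ => (fourierLp 2 (n : ℤ) : L2))
      ≤ (ℂ ∙ (fourierLp 2 (-1) : L2))ᗮ := by
  rw [Submodule.span_le]
  rintro x ⟨n, rfl⟩
  rw [SetLike.mem_coe, Submodule.mem_orthogonal]
  intro w hw
  obtain ⟨c, rfl⟩ := Submodule.mem_span_singleton.1 hw
  rw [inner_smul_left, inner_fourierLp_eq_zero (by omega : (-1 : ℤ) ≠ (n : ℤ)), mul_zero]

lemma H2_le_orth_em1 : H2 ≤ (ℂ ∙ (fourierLp 2 (-1) : L2))ᗮ :=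
  Submodule.topologicalClosure_minimal _ span_le_orth_em1 (Submodule.isClosed_orthogonal _)

/-- `e₋₁ ∈ H²₋`. -/
lemma em1_mem : (fourierLp 2 (-1) : L2) ∈ Hminus := by
  unfold Hminus
  rw [Submodule.mem_orthogonal]
  intro v hv
  have h := H2_le_orth_em1 hv
  rw [Submodule.mem_orthogonal] at h
  exact inner_eq_zero_symm.mp (h _ (Submodule.mem_span_singleton_self _))

/-- `e₋₁` as an element of `H²₋`. -/
def em1 : Hminus := ⟨(fourierLp 2 (-1) : L2), em1_mem⟩

/-- For `f ∈ K_u`, the function `u f ∈ uH² ⊆ K_u^⊥`. -/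
lemma mul_mem_KuP (u : Linf) (f : Ku u) : Mmul u (f : L2) ∈ KuP u := by
  unfold KuP
  rw [Submodule.mem_orthogonal]
  intro v hv
  have hv2 : v ∈ (uH2 u)ᗮ := (Submodule.mem_inf.1 hv).2
  have hm : Mmul u (f : L2) ∈ uH2 u :=
    Submodule.mem_map_of_mem (Submodule.mem_inf.1 f.2).1
  rw [Submodule.mem_orthogonal] at hv2
  exact inner_eq_zero_symm.mp (hv2 _ hm)

lemma Ku_le_H2 (u : Linf) : Ku u ≤ H2 := inf_le_left

/-- The inclusion `K_u ⊆ H²` as a continuous linear map. -/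
def KuIncl (u : Linf) : Ku u →L[ℂ] H2 :=
  LinearMap.mkContinuous (Submodule.inclusion (Ku_le_H2 u)) 1
    (fun f => by rw [one_mul]; exact le_of_eq rfl)

end DTTO

/-! For unimodular `φ`, multiplication by `φ` is unitary, so for a unit vector `f ∈ K_u^⊥`
Pythagoras gives `‖D_φ f‖² = 1 - ‖C f‖²` with `C = P_{K_u} M_φ : K_u^⊥ → K_u`; hence
`m(D_φ) = √(1 - ‖C‖²)`. The adjoint of `C` is `B_{φ̄} = (I - P_{K_u}) M_{φ̄} : K_u → K_u^⊥`, and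
since `K_u^⊥ = uH² ⊕ H²₋` with `P_{uH²} = M_u P M_ū`, every `f ∈ K_u` satisfies
`‖B_{φ̄} f‖² = ‖T_{\overline{uφ}} f‖² + ‖H_{φ̄} f‖²`. So the supremum in the formula is `‖C‖²`, and the
bounds come from `max(‖T‖, ‖H‖) ≤ ‖B_{φ̄}‖ ≤ √(‖T‖² + ‖H‖²)` for the restrictions `T`, `H` to `K_u`. -/

open ContinuousLinearMap
open scoped InnerProduct

theorem Real.sqrt_max_zero (x : ℝ) : √(max 0 x) = √x := by
  rcases le_total x 0 with h | h
  · rw [max_eq_left h, Real.sqrt_zero, Real.sqrt_eq_zero_of_nonpos h]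
  · rw [max_eq_right h]

section OperatorNorm

variable {𝕜 E F G G' : Type*} [RCLike 𝕜] [NormedAddCommGroup E] [NormedSpace 𝕜 E]
  [NormedAddCommGroup F] [NormedSpace 𝕜 F] [NormedAddCommGroup G] [NormedSpace 𝕜 G]
  [NormedAddCommGroup G'] [NormedSpace 𝕜 G']

theorem ContinuousLinearMap.iSup_sphere_norm_sq (T : E →L[𝕜] F) :
    ⨆ x : {x : E // ‖x‖ = 1}, ‖T x‖ ^ 2 = ‖T‖ ^ 2 := by
  rw [← Real.iSup_pow_of_ne_zero (fun _ => norm_nonneg _) two_ne_zero]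
  have hle : ∀ x : {x : E // ‖x‖ = 1}, ‖T x‖ ≤ ‖T‖ := fun x => by
    simpa [x.2] using T.le_opNorm x.1
  refine congrArg (· ^ 2) (le_antisymm (Real.iSup_le hle (norm_nonneg _)) ?_)
  exact opNorm_le_of_unit_norm (Real.iSup_nonneg fun _ => norm_nonneg _)
    fun x hx => le_ciSup ⟨‖T‖, Set.forall_mem_range.2 hle⟩ (⟨x, hx⟩ : {x : E // ‖x‖ = 1})

theorem ContinuousLinearMap.opNorm_le_of_norm_sq_apply_eq_add {B : E →L[𝕜] F}
    {T : E →L[𝕜] G} {H : E →L[𝕜] G'} (h : ∀ x, ‖B x‖ ^ 2 = ‖T x‖ ^ 2 + ‖H x‖ ^ 2) :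
    ‖T‖ ≤ ‖B‖ := by
  refine T.opNorm_le_bound (norm_nonneg _) fun x => (le_trans ?_ (B.le_opNorm x))
  nlinarith [h x, norm_nonneg (T x), norm_nonneg (B x), sq_nonneg ‖H x‖]

theorem ContinuousLinearMap.opNorm_sq_le_add_of_norm_sq_apply_eq {B : E →L[𝕜] F}
    {T : E →L[𝕜] G} {H : E →L[𝕜] G'} (h : ∀ x, ‖B x‖ ^ 2 = ‖T x‖ ^ 2 + ‖H x‖ ^ 2) :
    ‖B‖ ^ 2 ≤ ‖T‖ ^ 2 + ‖H‖ ^ 2 := by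
  have hB : ‖B‖ ≤ √(‖T‖ ^ 2 + ‖H‖ ^ 2) := by
    refine B.opNorm_le_bound (Real.sqrt_nonneg _) fun x => ?_
    rw [← Real.sqrt_sq (norm_nonneg (B x)), ← Real.sqrt_sq (norm_nonneg x), ← Real.sqrt_mul
      (by positivity), h]
    refine Real.sqrt_le_sqrt ?_
    nlinarith [T.le_opNorm x, H.le_opNorm x, norm_nonneg (T x), norm_nonneg (H x),
      norm_nonneg x, T.opNorm_nonneg, H.opNorm_nonneg]
  calc ‖B‖ ^ 2 ≤ √(‖T‖ ^ 2 + ‖H‖ ^ 2) ^ 2 := by gcongr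
    _ = ‖T‖ ^ 2 + ‖H‖ ^ 2 := Real.sq_sqrt (by positivity)

end OperatorNorm

section Projection

variable {𝕜 E : Type*} [RCLike 𝕜] [NormedAddCommGroup E] [InnerProductSpace 𝕜 E]

theorem ContinuousLinearMap.adjoint_orthogonalProjectionOnto_comp_comp_subtypeL [CompleteSpace E]
    (K L : Submodule 𝕜 E) [CompleteSpace K] [CompleteSpace L] (A : E →L[𝕜] E) :
    (L.orthogonalProjectionOnto ∘L A ∘L K.subtypeL)† =
      K.orthogonalProjectionOnto ∘L A† ∘L L.subtypeL := by
  simp only [adjoint_comp, Submodule.adjoint_subtypeL, Submodule.adjoint_orthogonalProjectionOnto,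
    comp_assoc]

theorem Submodule.norm_sq_starProjection_orthogonal_inf_orthogonal {H W : Submodule 𝕜 E}
    [H.HasOrthogonalProjection] [W.HasOrthogonalProjection]
    [(H ⊓ Wᗮ).HasOrthogonalProjection] (hWH : W ≤ H) (x : E) :
    ‖(H ⊓ Wᗮ)ᗮ.starProjection x‖ ^ 2 = ‖W.starProjection x‖ ^ 2 + ‖Hᗮ.starProjection x‖ ^ 2 := by
  set K := H ⊓ Wᗮ
  have hWK : W ≤ Kᗮ := W.le_orthogonal_orthogonal.trans (Submodule.orthogonal_le inf_le_right)
  -- `P_H x - P_W x` lies in `K` and differs from `P_H x` by an element of `W ≤ Kᗮ`.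
  have hsplit : H.starProjection x = K.starProjection x + W.starProjection x := by
    set y := H.starProjection x
    have hWy : W.starProjection y = W.starProjection x :=
      DFunLike.congr_fun (W.starProjection_comp_starProjection_of_le hWH) x
    have hKy : K.starProjection y = K.starProjection x :=
      DFunLike.congr_fun (K.starProjection_comp_starProjection_of_le inf_le_left) x
    have hK : K.starProjection y = y - W.starProjection y :=
      eq_starProjection_of_mem_orthogonal'
        ⟨H.sub_mem (H.starProjection_apply_mem x) (hWH (W.starProjection_apply_mem y)),
          W.sub_starProjection_mem_orthogonal y⟩
        (hWK (W.starProjection_apply_mem y)) (by abel)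
    rw [← hKy, hK, hWy, sub_add_cancel]
  have hKW : ⟪K.starProjection x, W.starProjection x⟫_𝕜 = 0 :=
    (K.mem_orthogonal' _).1 (hWK (W.starProjection_apply_mem x)) _ (K.starProjection_apply_mem x)
      |> inner_eq_zero_symm.1
  have hK := K.norm_sq_eq_add_norm_sq_starProjection x
  have hH := H.norm_sq_eq_add_norm_sq_starProjection x
  have hPyth := norm_add_sq_eq_norm_sq_add_norm_sq_of_inner_eq_zero _ _ hKW
  rw [hsplit] at hH
  linarith

end Projection

namespace DTTO

variable {E F G : Type*} [NormedAddCommGroup E] [NormedSpace ℂ E]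
  [NormedAddCommGroup F] [NormedSpace ℂ F] [NormedAddCommGroup G] [NormedSpace ℂ G]

theorem minMod_eq_sqrt_one_sub_opNorm_sq [Nonempty {x : E // ‖x‖ = 1}]
    (T : E →L[ℂ] F) (S : E →L[ℂ] G) (h : ∀ x, ‖T x‖ ^ 2 + ‖S x‖ ^ 2 = ‖x‖ ^ 2) :
    minMod T = √(1 - ‖S‖ ^ 2) := by
  have hT : ∀ x : {x : E // ‖x‖ = 1}, ‖T x.1‖ = √(1 - ‖S x.1‖ ^ 2) := fun x => by
    rw [← Real.sqrt_sq (norm_nonneg (T x.1))]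
    have := h x.1
    rw [x.2, one_pow] at this
    congr 1
    linarith
  have hbdd : BddAbove (Set.range fun x : {x : E // ‖x‖ = 1} => ‖S x.1‖ ^ 2) :=
    ⟨1, Set.forall_mem_range.2 fun x => by nlinarith [h x.1, x.2, sq_nonneg ‖T x.1‖]⟩
  rw [minMod, iInf_congr hT, ← S.iSup_sphere_norm_sq]
  refine (Antitone.map_ciSup_of_continuousAt (f := fun r : ℝ => √(1 - r)) ?_ ?_ hbdd).symm
  · fun_prop
  · exact fun a b hab => Real.sqrt_le_sqrt (by linarith)

lemma Mmul_coe (φ : Linf) (f : L2) : (Mmul φ f : 𝕋c → ℂ) =ᵐ[μT] fun z => φ z * f z :=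
  (memL2_smul φ f).coeFn_toLp

lemma conjL_coe (φ : Linf) : (conjL φ : 𝕋c → ℂ) =ᵐ[μT] fun z => (starRingEnd ℂ) (φ z) :=
  (memLinf_star φ).coeFn_toLp

lemma mulL_coe (φ ψ : Linf) : (mulL φ ψ : 𝕋c → ℂ) =ᵐ[μT] fun z => φ z * ψ z :=
  (memLinf_mul φ ψ).coeFn_toLp

lemma conjL_conjL (φ : Linf) : conjL (conjL φ) = φ := by
  refine Lp.ext ?_
  filter_upwards [conjL_coe (conjL φ), conjL_coe φ] with z h1 h2
  rw [h1, h2, Complex.conj_conj]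

lemma conjL_mulL (φ ψ : Linf) : conjL (mulL φ ψ) = mulL (conjL φ) (conjL ψ) := by
  refine Lp.ext ?_
  filter_upwards [conjL_coe (mulL φ ψ), mulL_coe φ ψ, mulL_coe (conjL φ) (conjL ψ), conjL_coe φ,
    conjL_coe ψ] with z h1 h2 h3 h4 h5
  rw [h1, h2, h3, h4, h5, map_mul]

lemma Mmul_Mmul (φ ψ : Linf) (f : L2) : Mmul φ (Mmul ψ f) = Mmul (mulL φ ψ) f := by
  refine Lp.ext ?_
  filter_upwards [Mmul_coe φ (Mmul ψ f), Mmul_coe ψ f, Mmul_coe (mulL φ ψ) f, mulL_coe φ ψ]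
    with z h1 h2 h3 h4
  rw [h1, h2, h3, h4, mul_assoc]

lemma Mmul_Mmul_conjL {φ : Linf} (hφ : ∀ᵐ z ∂μT, ‖φ z‖ = 1) (f : L2) :
    Mmul φ (Mmul (conjL φ) f) = f := by
  refine Lp.ext ?_
  filter_upwards [Mmul_coe φ (Mmul (conjL φ) f), Mmul_coe (conjL φ) f, conjL_coe φ, hφ]
    with z h1 h2 h3 h4
  rw [h1, h2, h3, ← mul_assoc, Complex.mul_conj', h4]
  simp

lemma norm_Mmul {φ : Linf} (hφ : ∀ᵐ z ∂μT, ‖φ z‖ = 1) (f : L2) : ‖Mmul φ f‖ = ‖f‖ := by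
  rw [Lp.norm_def, Lp.norm_def, eLpNorm_congr_norm_ae (g := ⇑f)]
  filter_upwards [Mmul_coe φ f, hφ] with z h1 h2
  rw [h1, norm_mul, h2, one_mul]

lemma adjoint_Mmul (φ : Linf) : (Mmul φ)† = Mmul (conjL φ) := by
  refine ((eq_adjoint_iff _ _).2 fun f g => ?_).symm
  rw [L2.inner_def, L2.inner_def]
  refine integral_congr_ae ?_
  filter_upwards [Mmul_coe φ g, Mmul_coe (conjL φ) f, conjL_coe φ] with z h1 h2 h3
  simp only [RCLike.inner_apply, h1, h2, h3, map_mul, Complex.conj_conj]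
  ring

def unitaryMmul {φ : Linf} (hφ : ∀ᵐ z ∂μT, ‖φ z‖ = 1) : L2 ≃ₗᵢ[ℂ] L2 :=
  LinearIsometryEquiv.ofSurjective ⟨(Mmul φ).toLinearMap, norm_Mmul hφ⟩
    fun f => ⟨Mmul (conjL φ) f, Mmul_Mmul_conjL hφ f⟩

lemma fourierLp_mem_H2 (n : ℕ) : (fourierLp 2 (n : ℤ) : L2) ∈ H2 :=
  Submodule.le_topologicalClosure _ (Submodule.subset_span ⟨n, rfl⟩)

lemma apply_mem_H2_of_forall_fourierLp (T : L2 →L[ℂ] L2)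
    (hT : ∀ n : ℕ, T (fourierLp 2 (n : ℤ)) ∈ H2) {f : L2} (hf : f ∈ H2) : T f ∈ H2 := by
  refine Submodule.topologicalClosure_minimal _ (t := H2.comap T.toLinearMap) ?_ ?_ hf
  · exact Submodule.span_le.2 (Set.range_subset_iff.2 hT)
  · exact (Submodule.isClosed_topologicalClosure _).preimage T.continuous

lemma Mmul_fourierLp (k m : ℤ) :
    Mmul (fourierLp ⊤ k) (fourierLp 2 m) = (fourierLp 2 (k + m) : L2) := by
  refine Lp.ext ?_
  filter_upwards [Mmul_coe (fourierLp ⊤ k) (fourierLp 2 m), coeFn_fourierLp (T := 2 * Real.pi) ⊤ k,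
    coeFn_fourierLp (T := 2 * Real.pi) 2 m, coeFn_fourierLp (T := 2 * Real.pi) 2 (k + m)]
    with z h1 h2 h3 h4
  rw [h1, h2, h3, h4, fourier_add]

lemma Mmul_fourierLp_mem_H2 (n : ℕ) {f : L2} (hf : f ∈ H2) :
    Mmul (fourierLp ⊤ (n : ℤ)) f ∈ H2 :=
  apply_mem_H2_of_forall_fourierLp _ (fun m => by
    simpa only [Mmul_fourierLp, Nat.cast_add] using fourierLp_mem_H2 (n + m)) hf

lemma Mmul_fourierLp_eq_Mmul_toL2 (u : Linf) (m : ℤ) :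
    Mmul u (fourierLp 2 m) = Mmul (fourierLp ⊤ m) (toL2 u) := by
  refine Lp.ext ?_
  filter_upwards [Mmul_coe u (fourierLp 2 m), Mmul_coe (fourierLp ⊤ m) (toL2 u),
    coeFn_fourierLp (T := 2 * Real.pi) 2 m, coeFn_fourierLp (T := 2 * Real.pi) ⊤ m,
    ((Lp.memLp u).mono_exponent (p := 2) le_top).coeFn_toLp] with z h1 h2 h3 h4 h5
  rw [h1, h2, h3, h4, toL2, h5, mul_comm]

lemma uH2_le_H2 {u : Linf} (hu : MemHinf u) : uH2 u ≤ H2 := by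
  rintro _ ⟨f, hf, rfl⟩
  refine apply_mem_H2_of_forall_fourierLp (Mmul u) (fun m => ?_) hf
  rw [Mmul_fourierLp_eq_Mmul_toL2]
  exact Mmul_fourierLp_mem_H2 m hu

lemma uH2_eq_map_unitaryMmul {u : Linf} (hu : ∀ᵐ z ∂μT, ‖u z‖ = 1) :
    uH2 u = H2.map ((unitaryMmul hu).toLinearEquiv : L2 →ₗ[ℂ] L2) :=
  rfl

lemma hasOrthogonalProjection_uH2 {u : Linf} (hu : ∀ᵐ z ∂μT, ‖u z‖ = 1) :
    (uH2 u).HasOrthogonalProjection := by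
  rw [uH2_eq_map_unitaryMmul hu]
  infer_instance

lemma norm_starProjection_uH2 {u : Linf} (hu : ∀ᵐ z ∂μT, ‖u z‖ = 1)
    [(uH2 u).HasOrthogonalProjection] (f : L2) :
    ‖(uH2 u).starProjection f‖ = ‖H2.starProjection (Mmul (conjL u) f)‖ := by
  have hsymm : (unitaryMmul hu).symm f = Mmul (conjL u) f :=
    (unitaryMmul hu).symm_apply_eq.2 (Mmul_Mmul_conjL hu f).symm
  simp only [uH2_eq_map_unitaryMmul hu, Submodule.starProjection_map_apply, hsymm,
    LinearIsometryEquiv.norm_map]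

lemma norm_sq_Bop_conjL {u : Linf} (hu : IsInnerFn u) (φ : Linf) (g : Ku u) :
    ‖Bop u (conjL φ) g‖ ^ 2 =
      ‖Top (conjL (mulL u φ)) (KuIncl u g)‖ ^ 2 + ‖Hop (conjL φ) (KuIncl u g)‖ ^ 2 := by
  have := hasOrthogonalProjection_uH2 hu.unimod
  have : (H2 ⊓ (uH2 u)ᗮ).HasOrthogonalProjection := inferInstanceAs (Ku u).HasOrthogonalProjection
  have h := Submodule.norm_sq_starProjection_orthogonal_inf_orthogonal (uH2_le_H2 hu.memH2)
    (Mmul (conjL φ) g)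
  rwa [norm_starProjection_uH2 hu.unimod, Mmul_Mmul, ← conjL_mulL] at h

lemma adjoint_Bop_conjL (u φ : Linf) :
    (Bop u (conjL φ))† = (Ku u).orthogonalProjectionOnto ∘L Mmul φ ∘L (KuP u).subtypeL := by
  rw [Bop, adjoint_orthogonalProjectionOnto_comp_comp_subtypeL, adjoint_Mmul, conjL_conjL]

lemma norm_sq_Dop_add_norm_sq_adjoint_Bop {u φ : Linf} (hφ : ∀ᵐ z ∂μT, ‖φ z‖ = 1) (f : KuP u) :
    ‖Dop u φ f‖ ^ 2 + ‖((Bop u (conjL φ))†) f‖ ^ 2 = ‖f‖ ^ 2 := by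
  have h := (Ku u).norm_sq_eq_add_norm_sq_projection (Mmul φ f)
  rw [norm_Mmul hφ] at h
  rw [adjoint_Bop_conjL, add_comm]
  exact h.symm

instance nonempty_unitSphere_KuP (u : Linf) : Nonempty {f : KuP u // ‖f‖ = 1} := by
  have hmem : (fourierLp 2 (-1) : L2) ∈ KuP u := Submodule.orthogonal_le (Ku_le_H2 u) em1_mem
  have hnorm : ‖(fourierLp 2 (-1) : L2)‖ = 1 := by
    simpa only [coe_fourierBasis] using (fourierBasis (T := 2 * Real.pi)).orthonormal.1 (-1)
  exact ⟨⟨⟨_, hmem⟩, hnorm⟩⟩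

theorem minMod_Dphi_formula_and_bounds_general (u φ : Linf) (hu : IsInnerFn u)
    (hmod : ∀ᵐ z ∂μT, ‖φ z‖ = 1) :
    minMod (Dop u φ)
        = Real.sqrt (1 - ⨆ f : {f : Ku u // ‖f‖ = 1},
            (‖Top (conjL (mulL u φ)) (KuIncl u f.1)‖ ^ 2
              + ‖Hop (conjL φ) (KuIncl u f.1)‖ ^ 2))
    ∧ Real.sqrt (max 0 (1 - (‖Top (conjL (mulL u φ)) ∘L KuIncl u‖ ^ 2
          + ‖Hop (conjL φ) ∘L KuIncl u‖ ^ 2)))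
        ≤ minMod (Dop u φ)
    ∧ minMod (Dop u φ)
        ≤ min (Real.sqrt (1 - ‖Top (conjL (mulL u φ)) ∘L KuIncl u‖ ^ 2))
            (Real.sqrt (1 - ‖Hop (conjL φ) ∘L KuIncl u‖ ^ 2)) := by
  set B := Bop u (conjL φ)
  set T := Top (conjL (mulL u φ)) ∘L KuIncl u
  set H := Hop (conjL φ) ∘L KuIncl u
  have hB : ∀ g, ‖B g‖ ^ 2 = ‖T g‖ ^ 2 + ‖H g‖ ^ 2 := norm_sq_Bop_conjL hu φ
  have hmin : minMod (Dop u φ) = √(1 - ‖B‖ ^ 2) := by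
    rw [minMod_eq_sqrt_one_sub_opNorm_sq _ _ (norm_sq_Dop_add_norm_sq_adjoint_Bop hmod),
      LinearIsometryEquiv.norm_map]
  have hsup : ⨆ f : {f : Ku u // ‖f‖ = 1}, (‖T f.1‖ ^ 2 + ‖H f.1‖ ^ 2) = ‖B‖ ^ 2 := by
    rw [← B.iSup_sphere_norm_sq]
    exact iSup_congr fun f => (hB f.1).symm
  have hT : ‖T‖ ^ 2 ≤ ‖B‖ ^ 2 := by
    gcongr
    exact opNorm_le_of_norm_sq_apply_eq_add hB
  have hH : ‖H‖ ^ 2 ≤ ‖B‖ ^ 2 := by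
    gcongr
    exact opNorm_le_of_norm_sq_apply_eq_add fun g => (hB g).trans (add_comm _ _)
  have hTH : ‖B‖ ^ 2 ≤ ‖T‖ ^ 2 + ‖H‖ ^ 2 := opNorm_sq_le_add_of_norm_sq_apply_eq hB
  refine ⟨by rw [hmin, ← hsup]; rfl, ?_, ?_⟩
  · rw [hmin, Real.sqrt_max_zero]
    exact Real.sqrt_le_sqrt (by linarith)
  · rw [hmin]
    exact le_min (Real.sqrt_le_sqrt (by linarith)) (Real.sqrt_le_sqrt (by linarith))

/-- For unimodular `φ`: the exact formula
`m(D_φ) = √(1 - sup_{f ∈ K_u, ‖f‖=1} (‖T_{conj(uφ)} f‖² + ‖H_{φ̄} f‖²))`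
together with the two-sided estimates. -/
theorem minMod_Dphi_formula_and_bounds (u φ : Linf) (hu : IsInnerFn u)
    (hnc : Nonconst u) (hmod : ∀ᵐ z ∂μT, ‖φ z‖ = 1) :
    minMod (Dop u φ)
        = Real.sqrt (1 - ⨆ f : {f : Ku u // ‖f‖ = 1},
            (‖Top (conjL (mulL u φ)) (KuIncl u f.1)‖ ^ 2
              + ‖Hop (conjL φ) (KuIncl u f.1)‖ ^ 2))
    ∧ Real.sqrt (max 0 (1 - (‖Top (conjL (mulL u φ)) ∘L KuIncl u‖ ^ 2
          + ‖Hop (conjL φ) ∘L KuIncl u‖ ^ 2)))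
        ≤ minMod (Dop u φ)
    ∧ minMod (Dop u φ)
        ≤ min (Real.sqrt (1 - ‖Top (conjL (mulL u φ)) ∘L KuIncl u‖ ^ 2))
            (Real.sqrt (1 - ‖Hop (conjL φ) ∘L KuIncl u‖ ^ 2)) :=
  minMod_Dphi_formula_and_bounds_general u φ hu hmod

end DTTO
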